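/- If G is a regular distribution function, then for every γ ∈ (0,1) there exists a nondecreasing sequence (v_n) of reals such that G(v_n)^n → γ as n → ∞. -/

import Mathlib

open MeasureTheory Filter Topology Set

noncomputable section

/-- Event that the partial maximum `max_{0 ≤ j ≤ n-1} X_j` is at most `x`
(empty maximum interpreted as `-∞`, so the event is everything for `n = 0`). -/
def maxEvent {Ω : Type*} (X : ℕ → Ω → ℝ) (n : ℕ) (x : ℝ) : Set Ω :=
  {ω | ∀ j < n, X j ω ≤ x}

/-- `G` is a distribution function: nondecreasing, right-continuous, with limits
`0` at `-∞` and `1` at `+∞`. -/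
def IsDistFun (G : ℝ → ℝ) : Prop :=
  Monotone G ∧ (∀ x, ContinuousWithinAt G (Set.Ici x) x) ∧
    Tendsto G atBot (nhds 0) ∧ Tendsto G atTop (nhds 1)

/-- `G` is a phantom distribution function for `X` under `P`:
`sup_x |P(M_n ≤ x) - G(x)^n| → 0`. -/
def IsPhantom {Ω : Type*} [MeasurableSpace Ω] (P : Measure Ω) (X : ℕ → Ω → ℝ)
    (G : ℝ → ℝ) : Prop :=
  Tendsto (fun n => ⨆ x : ℝ, |(P (maxEvent X n x)).toReal - G x ^ n|) atTop (nhds 0)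

/-- The right end `G_* = sup {x : G x < 1}`, as an extended real. -/
def GstarE (G : ℝ → ℝ) : EReal := sSup ((fun x : ℝ => (x : EReal)) '' {x | G x < 1})

/-- The filter of real numbers approaching `c ∈ (-∞, +∞]` strictly from the left
(equals `atTop` when `c = ⊤`). -/
def leftFilter (c : EReal) : Filter ℝ :=
  Filter.comap (fun x : ℝ => (x : EReal)) (nhdsWithin c (Set.Iio c))

/-- Regularity in the sense of O'Brien: `G(G_*-) = 1` and
`(1 - G(x-))/(1 - G(x)) → 1` as `x → G_*-`. -/
def IsRegularDF (G : ℝ → ℝ) : Prop :=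
  Tendsto G (leftFilter (GstarE G)) (nhds 1) ∧
    Tendsto (fun x => (1 - Function.leftLim G x) / (1 - G x))
      (leftFilter (GstarE G)) (nhds 1)

/-! Let `v n` be the least `x` with `γ ^ (1/n) ≤ G x`, so that `G (v n-) ^ n ≤ γ ≤ G (v n) ^ n`.
The lower bound forces `n (1 - G (v n)) ≤ -log γ`, hence
`n (G (v n) - G (v n-)) = n (1 - G (v n)) ((1 - G (v n-)) / (1 - G (v n)) - 1) → 0` by
regularity, because `v n → G_*` from the left. As `x ^ n - y ^ n ≤ n (x - y)` on `[-1, 1]`,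
both powers are squeezed to `γ`. -/

open Function

theorem abs_pow_sub_pow_le_nat_mul {x y : ℝ} (hx : |x| ≤ 1) (hy : |y| ≤ 1) (n : ℕ) :
    |x ^ n - y ^ n| ≤ n * |x - y| :=
  calc |x ^ n - y ^ n| ≤ |x - y| * n * max |x| |y| ^ (n - 1) := abs_pow_sub_pow_le x y n
    _ ≤ |x - y| * n * 1 := by gcongr; exact pow_le_one₀ (by positivity) (max_le hx hy)
    _ = n * |x - y| := by ring

theorem tendsto_pow_of_pow_le_le_pow {x y : ℕ → ℝ} {γ : ℝ} (hx : ∀ n, |x n| ≤ 1)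
    (hy : ∀ n, |y n| ≤ 1) (hlow : ∀ᶠ n in atTop, γ ≤ x n ^ n)
    (hup : ∀ᶠ n in atTop, y n ^ n ≤ γ)
    (hgap : Tendsto (fun n : ℕ => n * (x n - y n)) atTop (𝓝 0)) :
    Tendsto (fun n => x n ^ n) atTop (𝓝 γ) := by
  have hgap' : Tendsto (fun n : ℕ => γ + n * |x n - y n|) atTop (𝓝 γ) := by
    simpa [abs_mul] using tendsto_const_nhds.add hgap.abs
  refine tendsto_of_tendsto_of_tendsto_of_le_of_le' tendsto_const_nhds hgap' hlow ?_
  filter_upwards [hup] with n hn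
  linarith [le_abs_self (x n ^ n - y n ^ n), abs_pow_sub_pow_le_nat_mul (hx n) (hy n) n]

theorem nat_mul_one_sub_le_neg_log {x γ : ℝ} {n : ℕ} (hγ : 0 < γ) (hx : 0 ≤ x)
    (h : γ ≤ x ^ n) : n * (1 - x) ≤ -Real.log γ := by
  have : γ ≤ Real.exp (-(n * (1 - x))) :=
    calc γ ≤ x ^ n := h
      _ ≤ Real.exp (-(1 - x)) ^ n := by
        gcongr; simpa using Real.one_sub_le_exp_neg (1 - x)
      _ = Real.exp (-(n * (1 - x))) := by rw [← Real.exp_nat_mul]; ring_nf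
  linarith [(Real.log_le_iff_le_exp hγ).2 this]

theorem tendsto_nat_mul_sub_of_tendsto_ratio {x y : ℕ → ℝ} {γ : ℝ} (hγ : 0 < γ)
    (hx0 : ∀ n, 0 ≤ x n) (hx1 : ∀ n, x n < 1) (hlow : ∀ᶠ n in atTop, γ ≤ x n ^ n)
    (hratio : Tendsto (fun n => (1 - y n) / (1 - x n)) atTop (𝓝 1)) :
    Tendsto (fun n : ℕ => n * (x n - y n)) atTop (𝓝 0) := by
  have hbdd : ∀ᶠ n : ℕ in atTop,
      ‖n * (x n - y n)‖ ≤ -Real.log γ * |(1 - y n) / (1 - x n) - 1| := by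
    filter_upwards [hlow] with n hn
    have hpos : 0 < 1 - x n := sub_pos.2 (hx1 n)
    have hsplit : n * (x n - y n) = n * (1 - x n) * ((1 - y n) / (1 - x n) - 1) := by
      field_simp; ring
    rw [hsplit, norm_mul, Real.norm_eq_abs, abs_of_nonneg (by positivity)]
    exact mul_le_mul_of_nonneg_right (nat_mul_one_sub_le_neg_log hγ (hx0 n) hn) (abs_nonneg _)
  refine squeeze_zero_norm' hbdd ?_
  simpa using ((hratio.sub_const 1).abs).const_mul (-Real.log γ)

namespace IsDistFun

variable {G : ℝ → ℝ}

theorem nonneg (hG : IsDistFun G) (x : ℝ) : 0 ≤ G x :=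
  le_of_tendsto hG.2.2.1 ((eventually_le_atBot x).mono fun _ hy => hG.1 hy)

theorem le_one (hG : IsDistFun G) (x : ℝ) : G x ≤ 1 :=
  ge_of_tendsto hG.2.2.2 ((eventually_ge_atTop x).mono fun _ hy => hG.1 hy)

theorem bddBelow_setOf_le (hG : IsDistFun G) {t : ℝ} (ht : 0 < t) :
    BddBelow {x | t ≤ G x} := by
  obtain ⟨x₀, hx₀⟩ := (hG.2.2.1.eventually_lt_const ht).exists
  exact ⟨x₀, fun y hy => le_of_not_gt fun hlt => (hy.trans (hG.1 hlt.le)).not_gt hx₀⟩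

theorem setOf_le_nonempty (hG : IsDistFun G) {t : ℝ} (ht : t < 1) :
    {x | t ≤ G x}.Nonempty :=
  ((hG.2.2.2.eventually_const_lt ht).exists).imp fun _ => le_of_lt

theorem leftLim_nonneg (hG : IsDistFun G) (x : ℝ) : 0 ≤ leftLim G x :=
  (hG.nonneg (x - 1)).trans (hG.1.le_leftLim (sub_one_lt x))

theorem abs_le_one (hG : IsDistFun G) (x : ℝ) : |G x| ≤ 1 :=
  abs_le.2 ⟨by linarith [hG.nonneg x], hG.le_one x⟩

theorem abs_leftLim_le_one (hG : IsDistFun G) (x : ℝ) : |leftLim G x| ≤ 1 :=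
  abs_le.2 ⟨by linarith [hG.leftLim_nonneg x], (hG.1.leftLim_le le_rfl).trans (hG.le_one x)⟩

end IsDistFun

/-- The generalized inverse of `G`; it is the least `x` with `t ≤ G x` only for `0 < t < 1`,
where that set is nonempty and bounded below (otherwise `sInf` returns junk). -/
def quantile (G : ℝ → ℝ) (t : ℝ) : ℝ := sInf {x | t ≤ G x}

section Quantile

variable {G : ℝ → ℝ} {s t x : ℝ}

theorem quantile_le (hG : IsDistFun G) (ht : 0 < t) (hx : t ≤ G x) : quantile G t ≤ x :=
  csInf_le (hG.bddBelow_setOf_le ht) hx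

theorem le_quantile (hG : IsDistFun G) (ht : t < 1) (hx : G x < t) : x ≤ quantile G t :=
  le_csInf (hG.setOf_le_nonempty ht) fun _ hy =>
    le_of_not_gt fun hlt => (hy.trans (hG.1 hlt.le)).not_gt hx

theorem quantile_mono (hG : IsDistFun G) (hs : 0 < s) (ht : t < 1) (hst : s ≤ t) :
    quantile G s ≤ quantile G t :=
  csInf_le_csInf (hG.bddBelow_setOf_le hs) (hG.setOf_le_nonempty ht) fun _ hx => hst.trans hx

theorem le_apply_quantile (hG : IsDistFun G) (ht₀ : 0 < t) (ht₁ : t < 1) :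
    t ≤ G (quantile G t) := by
  have hmem : quantile G t ∈ closure {x | t ≤ G x} :=
    csInf_mem_closure (hG.setOf_le_nonempty ht₁) (hG.bddBelow_setOf_le ht₀)
  have hcont : Tendsto G (𝓝[{x | t ≤ G x}] quantile G t) (𝓝 (G (quantile G t))) :=
    (hG.2.1 _).mono_left (nhdsWithin_mono _ fun _ hx => quantile_le hG ht₀ hx)
  have := mem_closure_iff_nhdsWithin_neBot.1 hmem
  exact ge_of_tendsto hcont self_mem_nhdsWithin

theorem leftLim_quantile_le (hG : IsDistFun G) (ht : 0 < t) :
    leftLim G (quantile G t) ≤ t := by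
  refine le_of_tendsto (hG.1.tendsto_leftLim _) ?_
  filter_upwards [self_mem_nhdsWithin] with y hy
  exact le_of_not_ge fun hle => (quantile_le hG ht hle).not_gt hy

end Quantile

section RightEnd

variable {G : ℝ → ℝ} {t : ℝ}

theorem coe_le_GstarE {x : ℝ} (hx : G x < 1) : (x : EReal) ≤ GstarE G :=
  le_sSup ⟨x, hx, rfl⟩

theorem lt_one_of_coe_lt_GstarE (hG : Monotone G) {x : ℝ} (hx : (x : EReal) < GstarE G) :
    G x < 1 := by
  obtain ⟨_, ⟨y, hy, rfl⟩, hxy⟩ := lt_sSup_iff.1 hx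
  exact (hG (EReal.coe_lt_coe_iff.1 hxy).le).trans_lt hy

theorem IsDistFun.bot_lt_GstarE (hG : IsDistFun G) : ⊥ < GstarE G := by
  obtain ⟨x, hx⟩ := (hG.2.2.1.eventually_lt_const one_pos).exists
  exact (EReal.bot_lt_coe x).trans_le (coe_le_GstarE hx)

theorem leftFilter_neBot {c : EReal} (hc : ⊥ < c) : (leftFilter c).NeBot := by
  refine comap_neBot fun s hs => ?_
  obtain ⟨l, hl, hsub⟩ := (mem_nhdsLT_iff_exists_Ioo_subset' hc).1 hs
  obtain ⟨r, hlr, hrc⟩ := EReal.lt_iff_exists_real_btwn.1 hl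
  exact ⟨r, hsub ⟨hlr, hrc⟩⟩

theorem eventually_coe_lt_leftFilter (c : EReal) : ∀ᶠ x : ℝ in leftFilter c, (x : EReal) < c :=
  preimage_mem_comap self_mem_nhdsWithin

theorem tendsto_leftFilter {ι : Type*} {l : Filter ι} {v : ι → ℝ} {c : EReal}
    (hlt : ∀ᶠ i in l, (v i : EReal) < c) (hge : ∀ r : ℝ, (r : EReal) < c → ∀ᶠ i in l, r ≤ v i) :
    Tendsto v l (leftFilter c) := by
  rw [leftFilter, tendsto_comap_iff, tendsto_nhdsWithin_iff, tendsto_order]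
  refine ⟨⟨fun b hb => ?_, fun b hb => hlt.mono fun _ hi => hi.trans hb⟩, hlt⟩
  obtain ⟨r, hbr, hrc⟩ := EReal.lt_iff_exists_real_btwn.1 hb
  exact (hge r hrc).mono fun _ hi => hbr.trans_le (EReal.coe_le_coe_iff.2 hi)

theorem IsRegularDF.exists_coe_lt_GstarE_lt_apply (hG : IsDistFun G) (hreg : IsRegularDF G)
    (ht : t < 1) : ∃ x : ℝ, (x : EReal) < GstarE G ∧ t < G x := by
  have := leftFilter_neBot hG.bot_lt_GstarE
  exact ((eventually_coe_lt_leftFilter _).and (hreg.1.eventually_const_lt ht)).exists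

theorem IsRegularDF.coe_quantile_lt_GstarE (hG : IsDistFun G) (hreg : IsRegularDF G)
    (ht₀ : 0 < t) (ht₁ : t < 1) : (quantile G t : EReal) < GstarE G := by
  obtain ⟨x, hxc, htx⟩ := hreg.exists_coe_lt_GstarE_lt_apply hG ht₁
  exact (EReal.coe_le_coe_iff.2 (quantile_le hG ht₀ htx.le)).trans_lt hxc

theorem IsRegularDF.tendsto_quantile_leftFilter (hG : IsDistFun G) (hreg : IsRegularDF G)
    {ι : Type*} {l : Filter ι} {t : ι → ℝ} (ht₀ : ∀ i, 0 < t i) (ht₁ : ∀ i, t i < 1)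
    (hlim : Tendsto t l (𝓝 1)) :
    Tendsto (fun i => quantile G (t i)) l (leftFilter (GstarE G)) := by
  refine tendsto_leftFilter (.of_forall fun i => hreg.coe_quantile_lt_GstarE hG (ht₀ i) (ht₁ i))
    fun r hr => ?_
  filter_upwards [hlim.eventually_const_lt (lt_one_of_coe_lt_GstarE hG.1 hr)] with i hi
  exact le_quantile hG (ht₁ i) hi

end RightEnd

section RootLevel

variable {γ : ℝ}

/-- `γ ^ (1 / n)`, with the index `0` read as `1`: otherwise `γ ^ (0⁻¹) = γ ^ 0 = 1`. -/
def rootLevel (γ : ℝ) (n : ℕ) : ℝ := γ ^ ((max n 1 : ℕ) : ℝ)⁻¹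

theorem rootLevel_pos (hγ : 0 < γ) (n : ℕ) : 0 < rootLevel γ n :=
  Real.rpow_pos_of_pos hγ _

theorem rootLevel_lt_one (hγ₀ : 0 < γ) (hγ₁ : γ < 1) (n : ℕ) : rootLevel γ n < 1 :=
  Real.rpow_lt_one hγ₀.le hγ₁ (by positivity)

theorem rootLevel_monotone (hγ₀ : 0 < γ) (hγ₁ : γ < 1) : Monotone (rootLevel γ) := fun m n hmn =>
  Real.rpow_le_rpow_of_exponent_ge hγ₀ hγ₁.le
    (inv_anti₀ (by positivity) (by exact_mod_cast max_le_max hmn le_rfl))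

theorem rootLevel_pow (hγ : 0 < γ) {n : ℕ} (hn : 1 ≤ n) : rootLevel γ n ^ n = γ := by
  rw [rootLevel, max_eq_left hn, Real.rpow_inv_natCast_pow hγ.le (by omega)]

theorem tendsto_rootLevel (hγ : 0 < γ) : Tendsto (rootLevel γ) atTop (𝓝 1) := by
  have hexp : Tendsto (fun n : ℕ => ((max n 1 : ℕ) : ℝ)⁻¹) atTop (𝓝 0) :=
    tendsto_inv_atTop_zero.comp (tendsto_natCast_atTop_atTop.comp
      (tendsto_atTop_mono (fun n => le_max_left n 1) tendsto_id))
  have := (Real.continuousAt_const_rpow hγ.ne').tendsto.comp hexp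
  rwa [Real.rpow_zero] at this

end RootLevel

theorem regular_levels_for_all_gamma (G : ℝ → ℝ) (hG : IsDistFun G)
    (hreg : IsRegularDF G) :
    ∀ γ ∈ Set.Ioo (0 : ℝ) 1, ∃ v : ℕ → ℝ, Monotone v ∧
      Tendsto (fun n => G (v n) ^ n) atTop (nhds γ) := by
  rintro γ ⟨hγ₀, hγ₁⟩
  have ht₀ := rootLevel_pos hγ₀
  have ht₁ := rootLevel_lt_one hγ₀ hγ₁
  set v := fun n => quantile G (rootLevel γ n)
  have hv : Tendsto v atTop (leftFilter (GstarE G)) :=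
    hreg.tendsto_quantile_leftFilter hG ht₀ ht₁ (tendsto_rootLevel hγ₀)
  have hlow : ∀ᶠ n in atTop, γ ≤ G (v n) ^ n := by
    filter_upwards [eventually_ge_atTop 1] with n hn
    calc γ = rootLevel γ n ^ n := (rootLevel_pow hγ₀ hn).symm
      _ ≤ G (v n) ^ n := pow_le_pow_left₀ (ht₀ n).le (le_apply_quantile hG (ht₀ n) (ht₁ n)) n
  have hup : ∀ᶠ n in atTop, leftLim G (v n) ^ n ≤ γ := by
    filter_upwards [eventually_ge_atTop 1] with n hn
    calc leftLim G (v n) ^ n ≤ rootLevel γ n ^ n :=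
          pow_le_pow_left₀ (hG.leftLim_nonneg _) (leftLim_quantile_le hG (ht₀ n)) n
      _ = γ := rootLevel_pow hγ₀ hn
  refine ⟨v, fun m n hmn => quantile_mono hG (ht₀ m) (ht₁ n) (rootLevel_monotone hγ₀ hγ₁ hmn),
    tendsto_pow_of_pow_le_le_pow (fun _ => hG.abs_le_one _) (fun _ => hG.abs_leftLim_le_one _)
      hlow hup ?_⟩
  exact tendsto_nat_mul_sub_of_tendsto_ratio hγ₀ (fun _ => hG.nonneg _)
    (fun n => lt_one_of_coe_lt_GstarE hG.1 (hreg.coe_quantile_lt_GstarE hG (ht₀ n) (ht₁ n)))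
    hlow (hreg.2.comp hv)
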